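/- Let X be a uniformly discrete metric space with bounded geometry and let T ∈ C*(X). Then T is a ghost if and only if its matrix entries vanish at infinity, i.e. for every ε > 0 there exists a bounded set B ⊆ X such that ‖T_{x,y}‖ < ε whenever x ∉ B or y ∉ B. -/

import Mathlib

noncomputable section

open scoped ENNReal

/-- ℓ²(Y, H): the Hilbert space of square-summable `H`-valued families indexed by `Y`. -/
abbrev L2 (Y : Type*) (H : Type*) [NormedAddCommGroup H] [InnerProductSpace ℂ H] : Type _ :=
  lp (fun _ : Y => H) 2

namespace Roe

variable {Y H : Type*} [NormedAddCommGroup H] [InnerProductSpace ℂ H]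

set_option maxHeartbeats 1000000 in
/-- The matrix entry `T_{x,y}` of a bounded operator `T` on `ℓ²(Y,H)`: the continuous linear
map on `H` determined by `T_{x,y} v = (T (δ_y ⊗ v)) x`. -/
def entry (T : L2 Y H →L[ℂ] L2 Y H) (x y : Y) : H →L[ℂ] H :=
  letI := Classical.decEq Y
  LinearMap.mkContinuous
    { toFun := fun v => T (lp.single 2 y v) x
      map_add' := by
        intro v w
        show (T (lp.single 2 y (v + w))) x = (T (lp.single 2 y v)) x + (T (lp.single 2 y w)) x
        have h : lp.single (E := fun _ : Y => H) 2 y (v + w)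
            = lp.single 2 y v + lp.single 2 y w := by
          apply lp.ext
          funext j
          by_cases hj : j = y
          · subst hj
            simp only [lp.single_apply_self, lp.coeFn_add, Pi.add_apply]
          · simp only [lp.single_apply_ne _ _ _ hj, lp.coeFn_add, Pi.add_apply, add_zero]
        rw [h, map_add]
        simp only [lp.coeFn_add, Pi.add_apply]
      map_smul' := by
        intro c v
        show (T (lp.single 2 y (c • v))) x = c • (T (lp.single 2 y v)) x
        rw [lp.single_smul, map_smul]
        simp only [lp.coeFn_smul, Pi.smul_apply] }
    ‖T‖
    (by
      intro v
      show ‖(T (lp.single 2 y v)) x‖ ≤ ‖T‖ * ‖v‖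
      have h1 : ‖(T (lp.single 2 y v)) x‖ ≤ ‖T (lp.single 2 y v)‖ :=
        lp.norm_apply_le_norm (by norm_num) _ _
      have h2 : ‖T (lp.single 2 y v)‖ ≤ ‖T‖ * ‖lp.single (E := fun _ : Y => H) 2 y v‖ :=
        T.le_opNorm _
      have h3 : ‖lp.single (E := fun _ : Y => H) 2 y v‖ = ‖v‖ := by
        simpa using lp.norm_single (E := fun _ : Y => H) (p := 2) (by norm_num) (fun _ => v) y
      calc ‖(T (lp.single 2 y v)) x‖ ≤ ‖T‖ * ‖lp.single (E := fun _ : Y => H) 2 y v‖ :=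
            le_trans h1 h2
        _ = ‖T‖ * ‖v‖ := by rw [h3])

/-- `T` has propagation at most `R` with respect to the distance function `d`. -/
def PropagationLE (d : Y → Y → ℝ) (T : L2 Y H →L[ℂ] L2 Y H) (R : ℝ) : Prop :=
  ∀ x y : Y, R < d x y → entry T x y = 0

/-- A set is bounded with respect to the distance function `d`. -/
def DBounded (d : Y → Y → ℝ) (B : Set Y) : Prop :=
  ∃ C : ℝ, ∀ x ∈ B, ∀ y ∈ B, d x y ≤ C

/-- `T` is locally compact with respect to the distance function `d`: all matrix entries are
compact operators, and over every bounded set only finitely many matrix entries are nonzero. -/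
def LocallyCompact (d : Y → Y → ℝ) (T : L2 Y H →L[ℂ] L2 Y H) : Prop :=
  (∀ x y : Y, IsCompactOperator (entry T x y)) ∧
    ∀ B : Set Y, DBounded d B →
      {p : Y × Y | p.1 ∈ B ∧ p.2 ∈ B ∧ entry T p.1 p.2 ≠ 0}.Finite

/-- Membership in the algebraic Roe algebra `ℂ[Y]`: locally compact and finite propagation. -/
def MemRoeAlgebraic (d : Y → Y → ℝ) (T : L2 Y H →L[ℂ] L2 Y H) : Prop :=
  LocallyCompact d T ∧ ∃ R : ℝ, PropagationLE d T R

/-- The Roe algebra `C*(Y)`: the operator-norm closure of `ℂ[Y]` in `B(ℓ²(Y,H))`. -/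
def RoeAlgebra (d : Y → Y → ℝ) : Set (L2 Y H →L[ℂ] L2 Y H) :=
  closure {T | MemRoeAlgebraic d T}

/-- `T` is a ghost operator with respect to the distance function `d`. -/
def IsGhost (d : Y → Y → ℝ) (T : L2 Y H →L[ℂ] L2 Y H) : Prop :=
  ∀ R : ℝ, 0 < R → ∀ ε : ℝ, 0 < ε → ∃ B : Set Y, DBounded d B ∧
    ∀ ξ : L2 Y H, ‖ξ‖ = 1 →
      (∃ x : Y, x ∉ B ∧ ∀ z : Y, ξ z ≠ 0 → d x z < R) → ‖T ξ‖ < ε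

/-- The support of `ξ ∈ ℓ²(Y,H)` has diameter at most `S` for the distance function `d`. -/
def SupportDiamLE (d : Y → Y → ℝ) (ξ : L2 Y H) (S : ℝ) : Prop :=
  ∀ z w : Y, ξ z ≠ 0 → ξ w ≠ 0 → d z w ≤ S

end Roe

/-- `π : X' → X` is a `K`-metric cover: it is surjective, and for every `u` the restriction
of `π` to the open ball of radius `K` about `u` is a distance-preserving bijection onto the
open ball of radius `K` about `π u`. -/
def IsMetricCover {X' X : Type*} (d' : X' → X' → ℝ) (d : X → X → ℝ)
    (π : X' → X) (K : ℝ) : Prop :=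
  Function.Surjective π ∧
    ∀ u : X', Set.BijOn π {w | d' u w < K} {x | d (π u) x < K} ∧
      ∀ w w' : X', d' u w < K → d' u w' < K → d (π w) (π w') = d' w w'

/-- `T'` is the lift of `T` at scale `R` along `π`: its matrix entries are
`T'_{u,v} = T_{π u, π v}` when `d'(u,v) ≤ R` and `0` otherwise. -/
def IsLift {X' X H : Type*} [NormedAddCommGroup H] [InnerProductSpace ℂ H]
    (π : X' → X) (d' : X' → X' → ℝ)
    (T : L2 X H →L[ℂ] L2 X H) (R : ℝ) (T' : L2 X' H →L[ℂ] L2 X' H) : Prop :=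
  ∀ u v : X', (d' u v ≤ R → Roe.entry T' u v = Roe.entry T (π u) (π v)) ∧
    (R < d' u v → Roe.entry T' u v = 0)

/-- `T'` is the lift at scale `S` along `π` of the `n`-th diagonal block `T⁽ⁿ⁾ = PₙTPₙ` of a
bounded operator `T` on `ℓ²(⊔ₙ Vₙ, H)`. -/
def IsBlockLift {V : ℕ → Type*} {W H : Type*} [NormedAddCommGroup H] [InnerProductSpace ℂ H]
    {n : ℕ} (π : W → V n) (d' : W → W → ℝ)
    (T : L2 (Σ k, V k) H →L[ℂ] L2 (Σ k, V k) H) (S : ℝ)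
    (T' : L2 W H →L[ℂ] L2 W H) : Prop :=
  ∀ u v : W, (d' u v ≤ S → Roe.entry T' u v = Roe.entry T ⟨n, π u⟩ ⟨n, π v⟩) ∧
    (S < d' u v → Roe.entry T' u v = 0)

/-- The graph metric of a simple graph, as a real-valued distance function
(shortest path length). -/
def gdist {V : Type*} (G : SimpleGraph V) (u v : V) : ℝ := G.dist u v


/-!
Approximate `T` by an operator `S` of finite propagation `P` with `‖T - S‖` small.

If `T` is a ghost, then `T (δ_y ⊗ u)` is small for every unit `u` once `y` is far out, so the
columns of `T` vanish at infinity; and for `y` in a bounded set and `x` at distance `> P` from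
it, `T_{x,y} = (T - S)_{x,y}` has norm at most `‖T - S‖`.

Conversely, a unit vector `ξ` supported in `B(x, R)` has at most `N` points in its support,
so every coordinate of `T ξ` is at most `N η` when the entries outside a bounded set are below
`η`. Off the ball `B(x, R + P)`, which has at most `N` points, `T ξ` agrees with `(T - S) ξ`.
Hence `‖T ξ‖² ≤ N (N η)² + ‖T - S‖²`.
-/

open Metric

namespace lp

variable {α : Type*} {E : α → Type*} [∀ i, NormedAddCommGroup (E i)]

lemma norm_sq_le_of_eq_off_finset {f g : lp E 2} (G : Finset α) {c : ℝ}
    (hfg : ∀ i ∉ G, f i = g i) (hc : ∀ i ∈ G, ‖f i‖ ≤ c) :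
    ‖f‖ ^ 2 ≤ G.card * c ^ 2 + ‖g‖ ^ 2 := by
  classical
  have hasSum_sq (h : lp E 2) : HasSum (fun i => ‖h i‖ ^ 2) (‖h‖ ^ 2) := by
    simpa using hasSum_norm (p := 2) (by simp) h
  have hG : HasSum (fun i => if i ∈ G then c ^ 2 else 0) (G.card * c ^ 2) := by
    convert hasSum_sum_of_ne_finset_zero (L := .unconditional α) fun i (hi : i ∉ G) => if_neg hi
    simp [Finset.sum_ite_mem]
  refine hasSum_le (fun i => ?_) (hasSum_sq f) (hG.add (hasSum_sq g))
  by_cases hi : i ∈ G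
  · simp only [hi, if_true]
    nlinarith [pow_le_pow_left₀ (norm_nonneg _) (hc i hi) 2, sq_nonneg ‖g i‖]
  · simp [hi, hfg i hi]

lemma eq_sum_single_of_support_subset [DecidableEq α] {p : ℝ≥0∞} [Fact (1 ≤ p)] (hp : p ≠ ⊤)
    (f : lp E p) (F : Finset α) (hF : ∀ i, f i ≠ 0 → i ∈ F) :
    f = ∑ i ∈ F, lp.single p i (f i) :=
  (lp.hasSum_single hp f).unique <| hasSum_sum_of_ne_finset_zero fun i hi => by
    rw [not_imp_comm.mp (hF i) hi, lp.single_zero]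

end lp

namespace Roe

variable {Y H : Type*} [NormedAddCommGroup H] [InnerProductSpace ℂ H]

lemma entry_apply [DecidableEq Y] (T : L2 Y H →L[ℂ] L2 Y H) (x y : Y) (v : H) :
    entry T x y v = T (lp.single 2 y v) x := by
  obtain rfl : ‹DecidableEq Y› = Classical.decEq Y := Subsingleton.elim _ _
  rfl

lemma norm_entry_apply_le [DecidableEq Y] (T : L2 Y H →L[ℂ] L2 Y H) (x y : Y) (v : H) :
    ‖entry T x y v‖ ≤ ‖T (lp.single 2 y v)‖ :=
  entry_apply T x y v ▸ lp.norm_apply_le_norm (by norm_num) _ x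

lemma norm_entry_le (T : L2 Y H →L[ℂ] L2 Y H) (x y : Y) : ‖entry T x y‖ ≤ ‖T‖ := by
  classical
  refine ContinuousLinearMap.opNorm_le_bound _ (norm_nonneg T) fun v => ?_
  calc ‖entry T x y v‖ ≤ ‖T (lp.single 2 y v)‖ := norm_entry_apply_le T x y v
    _ ≤ ‖T‖ * ‖(lp.single 2 y v : L2 Y H)‖ := T.le_opNorm _
    _ = ‖T‖ * ‖v‖ := by rw [lp.norm_single (by norm_num)]

lemma entry_sub (T S : L2 Y H →L[ℂ] L2 Y H) (x y : Y) :
    entry (T - S) x y = entry T x y - entry S x y := by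
  classical
  ext v
  simp [entry_apply]

lemma norm_entry_le_of_norm_apply_single_le [DecidableEq Y] {T : L2 Y H →L[ℂ] L2 Y H}
    {y : Y} {c : ℝ} (hc : 0 ≤ c) (h : ∀ u : H, ‖u‖ = 1 → ‖T (lp.single 2 y u)‖ ≤ c) (x : Y) :
    ‖entry T x y‖ ≤ c :=
  ContinuousLinearMap.opNorm_le_of_unit_norm hc fun u hu =>
    (norm_entry_apply_le T x y u).trans (h u hu)

lemma apply_eq_sum_entry (T : L2 Y H →L[ℂ] L2 Y H) {ξ : L2 Y H} (F : Finset Y)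
    (hF : ∀ w, ξ w ≠ 0 → w ∈ F) (z : Y) : T ξ z = ∑ w ∈ F, entry T z w (ξ w) := by
  classical
  conv_lhs => rw [lp.eq_sum_single_of_support_subset (by simp) ξ F hF]
  rw [map_sum, lp.coeFn_sum, Finset.sum_apply]
  simp only [entry_apply]

lemma norm_apply_le_card_mul (T : L2 Y H →L[ℂ] L2 Y H) {ξ : L2 Y H} (hξ : ‖ξ‖ ≤ 1)
    (F : Finset Y) (hF : ∀ w, ξ w ≠ 0 → w ∈ F) {z : Y} {η : ℝ}
    (hη : ∀ w ∈ F, ‖entry T z w‖ ≤ η) : ‖T ξ z‖ ≤ F.card * η := by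
  rw [apply_eq_sum_entry T F hF z]
  calc ‖∑ w ∈ F, entry T z w (ξ w)‖ ≤ ∑ w ∈ F, ‖entry T z w‖ * ‖ξ w‖ :=
        (norm_sum_le _ _).trans (Finset.sum_le_sum fun w _ => (entry T z w).le_opNorm _)
    _ ≤ ∑ _w ∈ F, η * 1 := by
        gcongr with w hw
        · exact (norm_nonneg _).trans (hη w hw)
        · exact hη w hw
        · exact (lp.norm_apply_le_norm (by norm_num) ξ w).trans hξ
    _ = F.card * η := by simp

section Propagation

variable {d : Y → Y → ℝ}

lemma PropagationLE.mono {S : L2 Y H →L[ℂ] L2 Y H} {R R' : ℝ} (hS : PropagationLE d S R)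
    (hR : R ≤ R') : PropagationLE d S R' :=
  fun x y hxy => hS x y (hR.trans_lt hxy)

lemma exists_propagationLE_norm_sub_lt {T : L2 Y H →L[ℂ] L2 Y H} (hT : T ∈ RoeAlgebra d)
    {ε : ℝ} (hε : 0 < ε) : ∃ S R, 0 ≤ R ∧ PropagationLE d S R ∧ ‖T - S‖ < ε := by
  obtain ⟨S, ⟨-, R, hR⟩, hTS⟩ :=
    (Metric.mem_closure_iff (α := L2 Y H →L[ℂ] L2 Y H)).mp hT ε hε
  exact ⟨S, max R 0, le_max_right _ _, hR.mono (le_max_left _ _),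
    (dist_eq_norm T S).symm.trans_lt hTS⟩

lemma PropagationLE.norm_entry_le_norm_sub {S : L2 Y H →L[ℂ] L2 Y H} {R : ℝ}
    (hS : PropagationLE d S R) (T : L2 Y H →L[ℂ] L2 Y H) {x y : Y} (hxy : R < d x y) :
    ‖entry T x y‖ ≤ ‖T - S‖ := by
  simpa [entry_sub, hS x y hxy] using norm_entry_le (T - S) x y

lemma PropagationLE.apply_eq_zero {S : L2 Y H →L[ℂ] L2 Y H} {R : ℝ} (hS : PropagationLE d S R)
    {ξ : L2 Y H} (F : Finset Y) (hF : ∀ w, ξ w ≠ 0 → w ∈ F) {z : Y}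
    (hz : ∀ w ∈ F, R < d z w) : S ξ z = 0 := by
  rw [apply_eq_sum_entry S F hF z]
  exact Finset.sum_eq_zero fun w hw => by simp [hS z w (hz w hw)]

lemma PropagationLE.norm_sq_le {S : L2 Y H →L[ℂ] L2 Y H} {R : ℝ} (hS : PropagationLE d S R)
    (T : L2 Y H →L[ℂ] L2 Y H) {ξ : L2 Y H} (F : Finset Y) (hF : ∀ w, ξ w ≠ 0 → w ∈ F)
    (G : Finset Y) (hG : ∀ z ∉ G, ∀ w ∈ F, R < d z w) {c : ℝ} (hc : ∀ z ∈ G, ‖T ξ z‖ ≤ c) :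
    ‖T ξ‖ ^ 2 ≤ G.card * c ^ 2 + ‖(T - S) ξ‖ ^ 2 :=
  lp.norm_sq_le_of_eq_off_finset G (fun z hz => by
    simp [hS.apply_eq_zero F hF (hG z hz)]) hc

end Propagation

def EntriesVanishAtInfinity (d : Y → Y → ℝ) (T : L2 Y H →L[ℂ] L2 Y H) : Prop :=
  ∀ ε : ℝ, 0 < ε → ∃ B : Set Y, DBounded d B ∧
    ∀ x y : Y, (x ∉ B ∨ y ∉ B) → ‖entry T x y‖ < ε

section MetricSpace

variable {X : Type*} [MetricSpace X] {T : L2 X H →L[ℂ] L2 X H}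

lemma dBounded_dist_iff {B : Set X} :
    DBounded (fun x y : X => dist x y) B ↔ Bornology.IsBounded B :=
  isBounded_iff.symm

lemma IsGhost.exists_isBounded_norm_entry_le (hG : IsGhost (fun x y : X => dist x y) T)
    {ε : ℝ} (hε : 0 < ε) : ∃ B : Set X, Bornology.IsBounded B ∧
      ∀ x, ∀ y ∉ B, ‖entry T x y‖ ≤ ε := by
  classical
  obtain ⟨B, hB, hsmall⟩ := hG 1 one_pos ε hε
  refine ⟨B, dBounded_dist_iff.mp hB, fun x y hy =>
    norm_entry_le_of_norm_apply_single_le hε.le (fun u hu => (hsmall _ ?_ ⟨y, hy, ?_⟩).le) x⟩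
  · simpa [lp.norm_single] using hu
  · intro z hz
    obtain rfl : z = y := by_contra fun h => hz (lp.single_apply_ne _ _ _ h)
    simp

lemma entriesVanishAtInfinity_of_isGhost (hT : T ∈ RoeAlgebra (fun x y : X => dist x y))
    (hG : IsGhost (fun x y : X => dist x y) T) :
    EntriesVanishAtInfinity (fun x y : X => dist x y) T := by
  intro ε hε
  obtain ⟨S, R, hR, hS, hTS⟩ := exists_propagationLE_norm_sub_lt hT (half_pos hε)
  obtain ⟨B₀, hB₀, hcol⟩ := hG.exists_isBounded_norm_entry_le (half_pos hε)
  refine ⟨thickening (R + 1) B₀, dBounded_dist_iff.mpr hB₀.thickening, fun x y hxy => ?_⟩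
  by_cases hy : y ∈ B₀
  · have hx : x ∉ thickening (R + 1) B₀ :=
      hxy.resolve_right fun h => h (self_subset_thickening (by linarith) _ hy)
    have hfar : R < dist x y := by
      linarith [not_lt.mp fun h => hx (mem_thickening_iff.mpr ⟨y, hy, h⟩)]
    exact (hS.norm_entry_le_norm_sub T hfar).trans_lt (by linarith)
  · exact (hcol x y hy).trans_lt (half_lt_self hε)

lemma isGhost_of_entriesVanishAtInfinity
    (hbg : ∀ r : ℝ, ∃ N : ℕ, ∀ x : X, (ball x r).Finite ∧ (ball x r).ncard ≤ N)
    (hT : T ∈ RoeAlgebra (fun x y : X => dist x y))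
    (hvan : EntriesVanishAtInfinity (fun x y : X => dist x y) T) :
    IsGhost (fun x y : X => dist x y) T := by
  classical
  intro R _ ε hε
  obtain ⟨S, P, hP, hS, hTS⟩ := exists_propagationLE_norm_sub_lt hT (half_pos hε)
  obtain ⟨N, hN⟩ := hbg (R + P)
  -- chosen so that `N * (N * η) ^ 2 ≤ (ε / 2) ^ 2`
  set η := ε / (2 * (N + 1) ^ 2) with hη
  obtain ⟨B₀, hB₀, hvanB₀⟩ := hvan η (by positivity)
  refine ⟨thickening R B₀, dBounded_dist_iff.mpr (dBounded_dist_iff.mp hB₀).thickening, ?_⟩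
  rintro ξ hξ ⟨x, hx, hsupp⟩
  set G := (hN x).1.toFinset
  set F := G.filter (ξ · ≠ 0)
  have hGN : G.card ≤ N := (Set.ncard_eq_toFinset_card _ (hN x).1) ▸ (hN x).2
  have hFN : F.card ≤ N := (Finset.card_filter_le _ _).trans hGN
  have hF : ∀ w, ξ w ≠ 0 → w ∈ F := fun w hw => Finset.mem_filter.mpr
    ⟨(hN x).1.mem_toFinset.mpr (mem_ball'.mpr (by linarith [hsupp w hw])), hw⟩
  have hfar : ∀ z ∉ G, ∀ w ∈ F, P < dist z w := by
    intro z hz w hw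
    have hzx : R + P ≤ dist z x := not_lt.mp fun h => hz ((hN x).1.mem_toFinset.mpr h)
    linarith [hsupp w (Finset.mem_filter.mp hw).2, dist_triangle z w x, dist_comm x w]
  have hFB₀ : ∀ w ∈ F, w ∉ B₀ := fun w hw hwB =>
    hx (mem_thickening_iff.mpr ⟨w, hwB, hsupp w (Finset.mem_filter.mp hw).2⟩)
  have hrow : ∀ z, ‖T ξ z‖ ≤ N * η := fun z =>
    (norm_apply_le_card_mul T hξ.le F hF fun w hw => (hvanB₀ z w (.inr (hFB₀ w hw))).le).trans
      (by gcongr)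
  have hsq := hS.norm_sq_le T F hF G hfar fun z _ => hrow z
  have hTSξ : ‖(T - S) ξ‖ < ε / 2 :=
    ((T - S).le_opNorm ξ).trans_lt (by rwa [hξ, mul_one])
  have hcard : (G.card : ℝ) * (N * η) ^ 2 ≤ (ε / 2) ^ 2 := by
    calc (G.card : ℝ) * (N * η) ^ 2 ≤ (N + 1) * ((N + 1) * η) ^ 2 := by
          gcongr
          · exact_mod_cast hGN.trans (Nat.le_succ N)
          · linarith
      _ = (ε / 2) ^ 2 / (N + 1) := by rw [hη]; field_simp
      _ ≤ (ε / 2) ^ 2 := div_le_self (by positivity) (by linarith [(N.cast_nonneg : (0:ℝ) ≤ N)])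
  refine pow_lt_pow_iff_left₀ (norm_nonneg _) hε.le two_ne_zero |>.mp ?_
  nlinarith [norm_nonneg ((T - S) ξ)]

end MetricSpace

end Roe

theorem ghost_iff_entries_vanish_at_infinity_general
    (H₀ : Type) [NormedAddCommGroup H₀] [InnerProductSpace ℂ H₀]
    (X : Type) [MetricSpace X]
    (hbg : ∀ r : ℝ, ∃ N : ℕ, ∀ x : X, (Metric.ball x r).Finite ∧ (Metric.ball x r).ncard ≤ N)
    (T : L2 X H₀ →L[ℂ] L2 X H₀)
    (hT : T ∈ Roe.RoeAlgebra (fun x y : X => dist x y)) :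
    Roe.IsGhost (fun x y : X => dist x y) T ↔
      ∀ ε : ℝ, 0 < ε → ∃ B : Set X, Roe.DBounded (fun x y : X => dist x y) B ∧
        ∀ x y : X, (x ∉ B ∨ y ∉ B) → ‖Roe.entry T x y‖ < ε :=
  ⟨Roe.entriesVanishAtInfinity_of_isGhost hT, Roe.isGhost_of_entriesVanishAtInfinity hbg hT⟩

/-- for a uniformly discrete bounded geometry space, an element of the Roe
algebra is a ghost if and only if its matrix entries vanish at infinity. -/
theorem ghost_iff_entries_vanish_at_infinity
    (H₀ : Type) [NormedAddCommGroup H₀] [InnerProductSpace ℂ H₀] [CompleteSpace H₀]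
    [TopologicalSpace.SeparableSpace H₀] (hinf : ¬ FiniteDimensional ℂ H₀)
    (X : Type) [MetricSpace X]
    (hud : ∃ δ : ℝ, 0 < δ ∧ ∀ x y : X, x ≠ y → δ ≤ dist x y)
    (hbg : ∀ r : ℝ, ∃ N : ℕ, ∀ x : X, (Metric.ball x r).Finite ∧ (Metric.ball x r).ncard ≤ N)
    (T : L2 X H₀ →L[ℂ] L2 X H₀)
    (hT : T ∈ Roe.RoeAlgebra (fun x y : X => dist x y)) :
    Roe.IsGhost (fun x y : X => dist x y) T ↔
      ∀ ε : ℝ, 0 < ε → ∃ B : Set X, Roe.DBounded (fun x y : X => dist x y) B ∧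
        ∀ x y : X, (x ∉ B ∨ y ∉ B) → ‖Roe.entry T x y‖ < ε :=
  ghost_iff_entries_vanish_at_infinity_general H₀ X hbg T hT
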